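/- arXiv:1611.04483 — 3 statements merged into one kernel-verified Lean document; each statement's English description precedes it below -/
import Mathlib

section
/- Let A be a skew PBW extension of a ring R. Then for each index i (1 ≤ i ≤ n) there exist an injective ring endomorphism σ_i : R → R and a σ_i-derivation δ_i : R → R such that x_i · r = σ_i(r) · x_i + δ_i(r) for all r ∈ R. -/
open scoped BigOperators

/-- The ordered standard monomial `x₁^{α₁} ⋯ xₙ^{αₙ}`. -/
def monom {A : Type*} [Monoid A] {n : ℕ} (x : Fin n → A) (α : Fin n → ℕ) : A :=
  (List.ofFn fun i => x i ^ α i).prod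

/-- `A` is a free left `R`-module (via the embedding `φ`) with basis the standard monomials:
every element has a unique representation as a finite left `R`-linear combination of the
standard monomials. -/
def IsPBWBasis {R A : Type*} [Ring R] [Ring A] {n : ℕ} (φ : R →+* A) (x : Fin n → A) : Prop :=
  ∀ a : A, ∃! c : (Fin n → ℕ) →₀ R, a = c.sum fun α r => φ r * monom x α

/-- A skew PBW extension `A` of `R` (Definition 2.1), with the defining constants
`cR i r` (for `r ≠ 0`) and `cC i j` recorded as data. -/
structure SkewPBW (R A : Type*) [Ring R] [Ring A] (n : ℕ) where
  /-- the inclusion `R ⊆ A` -/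
  φ : R →+* A
  inj : Function.Injective φ
  /-- the variables `x₁, …, xₙ` -/
  x : Fin n → A
  /-- (ii): `A` is a free left `R`-module with basis the standard monomials -/
  basis : IsPBWBasis φ x
  cR : Fin n → R → R
  cR_ne : ∀ i (r : R), r ≠ 0 → cR i r ≠ 0
  /-- (iii): `xᵢ r − c_{i,r} xᵢ ∈ R` -/
  hR : ∀ i (r : R), r ≠ 0 → ∃ s : R, x i * φ r - φ (cR i r) * x i = φ s
  cC : Fin n → Fin n → R
  cC_ne : ∀ i j, cC i j ≠ 0
  /-- (iv): `xⱼ xᵢ − c_{i,j} xᵢ xⱼ ∈ R + Rx₁ + ⋯ + Rxₙ` -/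
  hC : ∀ i j, ∃ (r0 : R) (r : Fin n → R),
    x j * x i - φ (cC i j) * (x i * x j) = φ r0 + ∑ t, φ (r t) * x t

/-!
Since `1` and `xᵢ` are distinct standard monomials, freeness makes the coefficients `u, v` of
an element `φ u * xᵢ + φ v` unique. Axiom (iii) writes `xᵢ r` in this form (with `u = c_{i,r}`),
which defines `σᵢ r := u` and `δᵢ r := v`. Expanding `xᵢ (r + s)`, `xᵢ (r s)` and `xᵢ 1` in two
ways and comparing coefficients gives the ring-endomorphism and `σᵢ`-derivation laws, and
`σᵢ r = c_{i,r} ≠ 0` for `r ≠ 0` gives injectivity.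
-/

theorem monom_zero {A : Type*} [Monoid A] {n : ℕ} (x : Fin n → A) : monom x 0 = 1 := by
  simp [monom]

theorem monom_single {A : Type*} [Monoid A] {n : ℕ} (x : Fin n → A) (i : Fin n) :
    monom x (Pi.single i 1) = x i := by
  induction n with
  | zero => exact i.elim0
  | succ m ih =>
    cases i using Fin.cases with
    | zero => simp [monom, List.ofFn_succ]
    | succ k =>
      simpa [monom, List.ofFn_succ, Pi.single_apply, (Fin.succ_ne_zero k).symm] using
        ih (x ∘ Fin.succ) k

namespace IsPBWBasis

variable {R A : Type*} [Ring R] [Ring A] {n : ℕ} {φ : R →+* A} {x : Fin n → A}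

theorem sum_single_add_single (i : Fin n) (u v : R) :
    ((Finsupp.single (Pi.single i 1) u + Finsupp.single 0 v).sum fun α r => φ r * monom x α)
      = φ u * x i + φ v := by
  rw [Finsupp.sum_add_index' (by simp) (fun _ _ _ => by rw [map_add, add_mul]),
    Finsupp.sum_single_index (by simp), Finsupp.sum_single_index (by simp),
    monom_single, monom_zero, mul_one]

theorem eq_and_eq_of_mul_x_add_eq (hB : IsPBWBasis φ x) (i : Fin n) {u v u' v' : R}
    (h : φ u * x i + φ v = φ u' * x i + φ v') : u = u' ∧ v = v' := by
  classical
  obtain ⟨c, -, hc⟩ := hB (φ u * x i + φ v)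
  have hcoeff : Finsupp.single (Pi.single i 1) u + Finsupp.single 0 v
      = Finsupp.single (Pi.single i 1) u' + Finsupp.single 0 v' :=
    (hc _ (sum_single_add_single i u v).symm).trans
      (hc _ (h.trans (sum_single_add_single i u' v').symm)).symm
  have hi : (Pi.single i 1 : Fin n → ℕ) ≠ 0 := by simp [Pi.single_eq_zero_iff]
  constructor
  · simpa [Finsupp.single_apply, hi.symm] using DFunLike.congr_fun hcoeff (Pi.single i 1)
  · simpa [Finsupp.single_apply, hi] using DFunLike.congr_fun hcoeff 0

end IsPBWBasis

namespace SkewPBW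

variable {R A : Type*} [Ring R] [Ring A] {n : ℕ} (E : SkewPBW R A n) (i : Fin n)

theorem exists_x_mul_φ (r : R) : ∃ u v : R, E.x i * E.φ r = E.φ u * E.x i + E.φ v := by
  by_cases hr : r = 0
  · exact ⟨0, 0, by simp [hr]⟩
  · obtain ⟨s, hs⟩ := E.hR i r hr
    exact ⟨E.cR i r, s, sub_eq_iff_eq_add'.mp hs⟩

noncomputable def sigmaFun (r : R) : R := (E.exists_x_mul_φ i r).choose

noncomputable def delta (r : R) : R := (E.exists_x_mul_φ i r).choose_spec.choose

theorem x_mul_φ (r : R) :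
    E.x i * E.φ r = E.φ (E.sigmaFun i r) * E.x i + E.φ (E.delta i r) :=
  (E.exists_x_mul_φ i r).choose_spec.choose_spec

variable {E i} in
theorem sigmaFun_eq_and_delta_eq {r u v : R} (h : E.x i * E.φ r = E.φ u * E.x i + E.φ v) :
    E.sigmaFun i r = u ∧ E.delta i r = v :=
  E.basis.eq_and_eq_of_mul_x_add_eq i ((E.x_mul_φ i r).symm.trans h)

theorem sigmaFun_eq_cR {r : R} (hr : r ≠ 0) : E.sigmaFun i r = E.cR i r := by
  obtain ⟨s, hs⟩ := E.hR i r hr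
  exact (sigmaFun_eq_and_delta_eq (sub_eq_iff_eq_add'.mp hs)).1

theorem sigmaFun_zero_and_delta_zero : E.sigmaFun i 0 = 0 ∧ E.delta i 0 = 0 :=
  sigmaFun_eq_and_delta_eq (by simp)

theorem sigmaFun_one_and_delta_one : E.sigmaFun i 1 = 1 ∧ E.delta i 1 = 0 :=
  sigmaFun_eq_and_delta_eq (by simp)

theorem sigmaFun_add_and_delta_add (r s : R) :
    E.sigmaFun i (r + s) = E.sigmaFun i r + E.sigmaFun i s ∧
      E.delta i (r + s) = E.delta i r + E.delta i s := by
  apply sigmaFun_eq_and_delta_eq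
  rw [map_add, mul_add, E.x_mul_φ i r, E.x_mul_φ i s, map_add, map_add]
  noncomm_ring

theorem sigmaFun_mul_and_delta_mul (r s : R) :
    E.sigmaFun i (r * s) = E.sigmaFun i r * E.sigmaFun i s ∧
      E.delta i (r * s) = E.sigmaFun i r * E.delta i s + E.delta i r * s := by
  apply sigmaFun_eq_and_delta_eq
  calc E.x i * E.φ (r * s)
      = (E.φ (E.sigmaFun i r) * E.x i + E.φ (E.delta i r)) * E.φ s := by
        rw [map_mul, ← mul_assoc, E.x_mul_φ i r]
    _ = E.φ (E.sigmaFun i r) * (E.x i * E.φ s) + E.φ (E.delta i r) * E.φ s := by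
        noncomm_ring
    _ = _ := by
        rw [E.x_mul_φ i s]
        simp only [map_mul, map_add]
        noncomm_ring

noncomputable def sigma : R →+* R where
  toFun := E.sigmaFun i
  map_one' := (E.sigmaFun_one_and_delta_one i).1
  map_mul' r s := (E.sigmaFun_mul_and_delta_mul i r s).1
  map_zero' := (E.sigmaFun_zero_and_delta_zero i).1
  map_add' r s := (E.sigmaFun_add_and_delta_add i r s).1

theorem sigma_injective : Function.Injective (E.sigma i) :=
  (injective_iff_map_eq_zero _).mpr fun r hσ => by
    by_contra hr
    exact E.cR_ne i r hr ((E.sigmaFun_eq_cR i hr).symm.trans hσ)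

end SkewPBW

/-- **Proposition 2.2.** If `A` is a skew PBW extension of `R`, then for each `i` there exist
an injective ring endomorphism `σᵢ : R → R` and a `σᵢ`-derivation `δᵢ : R → R` such that
`xᵢ r = σᵢ(r) xᵢ + δᵢ(r)` for all `r ∈ R`. -/
theorem skewPBW_exists_sigma_delta {R A : Type*} [Ring R] [Ring A] {n : ℕ}
    (E : SkewPBW R A n) (i : Fin n) :
    ∃ (σ : R →+* R) (δ : R → R), Function.Injective σ ∧
      (∀ r s : R, δ (r + s) = δ r + δ s) ∧
      (∀ r s : R, δ (r * s) = σ r * δ s + δ r * s) ∧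
      (∀ r : R, E.x i * E.φ r = E.φ (σ r) * E.x i + E.φ (δ r)) :=
  ⟨E.sigma i, E.delta i, E.sigma_injective i,
    fun r s => (E.sigmaFun_add_and_delta_add i r s).2,
    fun r s => (E.sigmaFun_mul_and_delta_mul i r s).2, E.x_mul_φ i⟩
end

section
/- Let A be a constant skew PBW extension of a field K, presented as A = K⟨x_1,…,x_n⟩/⟨P⟩ with P spanned by elements x_j x_i − c_{i,j} x_i x_j + r_0 + r_1 x_1 + ⋯ + r_n x_n (c_{i,j} ∈ K nonzero, r_t ∈ K), and let B = K⟨x_1,…,x_n⟩/⟨x_j x_i − c_{i,j} x_i x_j⟩ be its homogeneous version. Then A is a PBW deformation of B: the natural graded algebra map p : B → Gr(A) induced by the projection is an isomorphism. -/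
/-- `ψ` exhibits the ring `G` as the associated graded ring `Gr(A) = ⊕ₘ F m / F (m-1)` of the
filtration `F` of `A`. -/
structure GrModel {A : Type*} [Ring A] (F : ℕ → AddSubgroup A)
    (hmul : ∀ {i j : ℕ} {a b : A}, a ∈ F i → b ∈ F j → a * b ∈ F (i + j))
    (hone : (1 : A) ∈ F 0) (G : Type*) [Ring G] where
  ψ : ∀ m : ℕ, F m →+ G
  ker_zero : ∀ a : F 0, ψ 0 a = 0 ↔ (a : A) = 0
  ker_succ : ∀ (m : ℕ) (a : F (m + 1)), ψ (m + 1) a = 0 ↔ (a : A) ∈ F m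
  mul_symbol : ∀ (i j : ℕ) (a : F i) (b : F j),
    ψ (i + j) ⟨(a : A) * b, hmul a.2 b.2⟩ = ψ i a * ψ j b
  one_symbol : ψ 0 ⟨1, hone⟩ = 1
  decomp : ∀ g : G, ∃ (N : ℕ) (a : ∀ m, F m), g = ∑ m ∈ Finset.range N, ψ m (a m)
  indep : ∀ (N : ℕ) (a : ∀ m, F m),
    ∑ m ∈ Finset.range N, ψ m (a m) = 0 → ∀ m < N, ψ m (a m) = 0

/-- The defining relations of a constant skew PBW extension of `K`:
`xⱼxᵢ = c_{ij} xᵢxⱼ − r₀ − Σₜ rₜ xₜ` for `i < j`. -/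
def constExtRel (K : Type*) [Field K] (n : ℕ) (c : Fin n → Fin n → K)
    (k0 : Fin n → Fin n → K) (kl : Fin n → Fin n → Fin n → K) :
    FreeAlgebra K (Fin n) → FreeAlgebra K (Fin n) → Prop :=
  fun u v => ∃ i j : Fin n, i < j ∧ u = FreeAlgebra.ι K j * FreeAlgebra.ι K i ∧
    v = c i j • (FreeAlgebra.ι K i * FreeAlgebra.ι K j) -
        algebraMap K (FreeAlgebra K (Fin n)) (k0 i j) - ∑ t, kl i j t • FreeAlgebra.ι K t

/-- The relations of the homogeneous version `B`: `xⱼxᵢ = c_{ij} xᵢxⱼ` for `i < j`. -/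
def homogRel (K : Type*) [Field K] (n : ℕ) (c : Fin n → Fin n → K) :
    FreeAlgebra K (Fin n) → FreeAlgebra K (Fin n) → Prop :=
  fun u v => ∃ i j : Fin n, i < j ∧ u = FreeAlgebra.ι K j * FreeAlgebra.ι K i ∧
    v = c i j • (FreeAlgebra.ι K i * FreeAlgebra.ι K j)

/-- The degree filtration on a quotient of the free algebra: `F m` is the span of the images
of the words of length `≤ m`. -/
def quotDegFiltration (K : Type*) [Field K] (n : ℕ)
    (rel : FreeAlgebra K (Fin n) → FreeAlgebra K (Fin n) → Prop) (m : ℕ) :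
    AddSubgroup (RingQuot rel) :=
  AddSubgroup.closure {a | ∃ (k : K) (l : List (Fin n)), l.length ≤ m ∧
    a = k • (l.map fun i => RingQuot.mkAlgHom K rel (FreeAlgebra.ι K i)).prod}

/-!
The symbols `ψ₁(xᵢ)` of the generators of `A` satisfy the relations of `B`: the difference
`xⱼxᵢ - c_{ij} xᵢxⱼ = -(r₀ + Σₜ rₜxₜ)` lies in filtration degree one, so it has zero symbol in degree
two. This gives the map `B → Gr(A)`, which is onto because `F_m(A)` is spanned by words of length
at most `m`, whose degree-`m` symbols are products of the `ψ₁(xᵢ)` (or zero).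

For injectivity, rewriting inversions `xⱼxᵢ ↦ c_{ij} xᵢxⱼ + (shorter words)` writes every word of
length at most `m` as a combination of standard monomials of degree at most `m`, in `A` as well as
in `B`. Since the standard monomials are a basis of `A`, a nonzero combination of those of degree
exactly `m` does not lie in `F_{m-1}(A)`, i.e. has nonzero symbol; together with the independence
of the graded pieces of `Gr(A)`, the symbols of the standard monomials are linearly independent.
They are the images of the standard monomials of `B`, which span `B`.
-/

section Filtration

variable {A : Type*} [Ring A] {F : ℕ → AddSubgroup A}
  (hmul : ∀ {i j : ℕ} {a b : A}, a ∈ F i → b ∈ F j → a * b ∈ F (i + j))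
include hmul

theorem filtration_list_prod_mem (hone : (1 : A) ∈ F 0) {ι : Type*} {x : ι → A}
    (hx : ∀ i, x i ∈ F 1) (l : List ι) : (l.map x).prod ∈ F l.length := by
  induction l with
  | nil => exact hone
  | cons i l ih => simpa [add_comm] using hmul (hx i) ih

theorem filtration_smul_mem {K : Type*} [CommRing K] [Algebra K A]
    (halgF : ∀ k : K, algebraMap K A k ∈ F 0) (k : K) {m : ℕ} {a : A} (ha : a ∈ F m) :
    k • a ∈ F m := by
  simpa [Algebra.smul_def, Algebra.commutes] using hmul ha (halgF k)

end Filtration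

namespace GrModel

variable {A G : Type*} [Ring A] [Ring G] {F : ℕ → AddSubgroup A}
  {hmul : ∀ {i j : ℕ} {a b : A}, a ∈ F i → b ∈ F j → a * b ∈ F (i + j)}
  {hone : (1 : A) ∈ F 0} (M : GrModel F hmul hone G)

theorem psi_congr {i j : ℕ} (h : i = j) {a b : A} (hab : a = b) (ha : a ∈ F i) (hb : b ∈ F j) :
    M.ψ i ⟨a, ha⟩ = M.ψ j ⟨b, hb⟩ := by
  subst h hab
  rfl

theorem psi_eq_zero_of_mem_of_lt (hF : Monotone F) {j m : ℕ} (hjm : j < m) (a : F m)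
    (ha : (a : A) ∈ F j) : M.ψ m a = 0 := by
  obtain ⟨m, rfl⟩ := Nat.exists_eq_add_of_lt hjm
  exact (M.ker_succ _ a).2 (hF (by omega) ha)

theorem psi_list_prod {ι : Type*} {x : ι → A} (hx : ∀ i, x i ∈ F 1) (l : List ι) :
    M.ψ l.length ⟨(l.map x).prod, filtration_list_prod_mem hmul hone hx l⟩ =
      (l.map fun i => M.ψ 1 ⟨x i, hx i⟩).prod := by
  induction l with
  | nil => exact M.one_symbol
  | cons i l ih =>
    have hl := filtration_list_prod_mem hmul hone hx l
    refine (M.psi_congr (by simp [add_comm]) (by simp) _ (hmul (hx i) hl)).trans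
      ((M.mul_symbol 1 _ ⟨x i, hx i⟩ ⟨_, hl⟩).trans ?_)
    simp [ih]

variable {K : Type*} [CommRing K] [Algebra K A] [Algebra K G]
  (halg : ∀ (k : K) (h : algebraMap K A k ∈ F 0), M.ψ 0 ⟨algebraMap K A k, h⟩ = algebraMap K G k)
  (halgF : ∀ k : K, algebraMap K A k ∈ F 0)
include halg halgF

theorem psi_smul (k : K) {m : ℕ} {a : A} (ha : a ∈ F m) :
    M.ψ m ⟨k • a, filtration_smul_mem hmul halgF k ha⟩ = k • M.ψ m ⟨a, ha⟩ := by
  calc M.ψ m ⟨k • a, _⟩ = M.ψ (m + 0) ⟨a * algebraMap K A k, hmul ha (halgF k)⟩ :=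
        M.psi_congr rfl (by rw [Algebra.smul_def, Algebra.commutes]) _ _
    _ = k • M.ψ m ⟨a, ha⟩ := by
        rw [M.mul_symbol m 0 ⟨a, ha⟩ ⟨_, halgF k⟩, halg, ← Algebra.commutes, ← Algebra.smul_def]

theorem psi_mul_psi_eq_smul_of_sub_mem {a b : A} (ha : a ∈ F 1) (hb : b ∈ F 1) (k : K)
    (h : a * b - k • (b * a) ∈ F 1) :
    M.ψ 1 ⟨a, ha⟩ * M.ψ 1 ⟨b, hb⟩ = k • (M.ψ 1 ⟨b, hb⟩ * M.ψ 1 ⟨a, ha⟩) := by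
  have hzero : M.ψ (1 + 1) (⟨a * b, hmul ha hb⟩ -
      ⟨k • (b * a), filtration_smul_mem hmul halgF k (hmul hb ha)⟩) = 0 :=
    (M.ker_succ 1 _).2 h
  rw [map_sub, sub_eq_zero, M.psi_smul halg halgF k (hmul hb ha)] at hzero
  rwa [← M.mul_symbol 1 1 ⟨a, ha⟩ ⟨b, hb⟩, ← M.mul_symbol 1 1 ⟨b, hb⟩ ⟨a, ha⟩]

end GrModel

namespace ConstSkewPBW

open Submodule

variable {n : ℕ}

section Words

def sortedWord (α : Fin n → ℕ) : List (Fin n) :=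
  (List.ofFn fun i => List.replicate (α i) i).flatten

theorem monom_eq_prod_sortedWord {R : Type*} [Monoid R] (x : Fin n → R) (α : Fin n → ℕ) :
    monom x α = ((sortedWord α).map x).prod := by
  simp only [monom, sortedWord, List.map_flatten, List.map_ofFn, List.prod_flatten,
    Function.comp_def, List.map_replicate, List.prod_replicate]

theorem length_sortedWord (α : Fin n → ℕ) : (sortedWord α).length = ∑ i, α i := by
  simp [sortedWord, List.length_flatten, List.map_ofFn, Function.comp_def, List.sum_ofFn]

theorem count_sortedWord (α : Fin n → ℕ) (j : Fin n) : (sortedWord α).count j = α j := by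
  simp [sortedWord, List.count_flatten, List.map_ofFn, Function.comp_def, List.count_replicate,
    List.sum_ofFn]

theorem pairwise_sortedWord (α : Fin n → ℕ) : (sortedWord α).Pairwise (· ≤ ·) := by
  simp only [sortedWord, List.pairwise_flatten, List.mem_ofFn, List.pairwise_ofFn]
  refine ⟨?_, fun i j hij a ha b hb => ?_⟩
  · rintro _ ⟨i, rfl⟩
    exact List.pairwise_replicate.2 (Or.inr le_rfl)
  · rw [List.eq_of_mem_replicate ha, List.eq_of_mem_replicate hb]
    exact hij.le

theorem eq_sortedWord_count {l : List (Fin n)} (h : l.Pairwise (· ≤ ·)) :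
    l = sortedWord (l.count ·) :=
  List.Perm.eq_of_pairwise' h (pairwise_sortedWord _) <|
    List.perm_iff_count.2 fun a => (count_sortedWord (l.count ·) a).symm

theorem exists_adjacent_inversion {l : List (Fin n)} (h : ¬ l.Pairwise (· ≤ ·)) :
    ∃ u i j v, i < j ∧ l = u ++ j :: i :: v := by
  induction l with
  | nil => exact absurd List.Pairwise.nil h
  | cons a l ih =>
    by_cases hl : l.Pairwise (· ≤ ·)
    · cases l with
      | nil => exact absurd (List.pairwise_singleton _ a) h
      | cons b t =>
        have hab : ¬ a ≤ b := fun hab => h (List.pairwise_cons_cons_iff_of_trans.2 ⟨hab, hl⟩)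
        exact ⟨[], b, a, t, lt_of_not_ge hab, rfl⟩
    · obtain ⟨u, i, j, v, hij, rfl⟩ := ih hl
      exact ⟨a :: u, i, j, v, hij, rfl⟩

/-- The termination measure for rewriting a word into standard monomials: swapping an adjacent
inversion decreases it (`sortRank_swap_lt`). -/
def sortRank (l : List (Fin n)) : ℕ := Nat.ofDigits 2 (l.reverse.map Fin.val)

theorem sortRank_swap_lt (u v : List (Fin n)) {i j : Fin n} (hij : i < j) :
    sortRank (u ++ i :: j :: v) < sortRank (u ++ j :: i :: v) := by
  have hij' : (i : ℕ) < j := hij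
  simp only [sortRank, List.reverse_append, List.reverse_cons, List.map_append, List.map_cons,
    List.append_assoc, List.cons_append, List.nil_append, Nat.ofDigits_append,
    Nat.ofDigits_cons]
  gcongr ?_ + _ * ?_
  omega

end Words

section Spanning

variable {K R : Type*} [CommRing K] [Ring R] [Algebra K R]

def SkewRelations (x : Fin n → R) (c k0 : Fin n → Fin n → K) (kl : Fin n → Fin n → Fin n → K) :
    Prop :=
  ∀ i j, i < j → x j * x i = c i j • (x i * x j) - algebraMap K R (k0 i j) - ∑ t, kl i j t • x t

variable {x : Fin n → R} {c k0 : Fin n → Fin n → K} {kl : Fin n → Fin n → Fin n → K}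

theorem SkewRelations.list_prod_swap (hrel : SkewRelations x c k0 kl) (u v : List (Fin n))
    {i j : Fin n} (hij : i < j) :
    ((u ++ j :: i :: v).map x).prod =
      c i j • ((u ++ i :: j :: v).map x).prod - k0 i j • ((u ++ v).map x).prod -
        ∑ t, kl i j t • ((u ++ t :: v).map x).prod := by
  simp only [List.map_append, List.map_cons, List.prod_append, List.prod_cons]
  rw [← mul_assoc (x j), hrel i j hij]
  simp only [mul_sub, sub_mul, Finset.mul_sum, Finset.sum_mul, Algebra.smul_def, mul_assoc,
    Algebra.commutes]

theorem SkewRelations.list_prod_mem_span_monom (hrel : SkewRelations x c k0 kl)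
    (l : List (Fin n)) :
    (l.map x).prod ∈ span K (monom x '' {α | ∑ i, α i ≤ l.length}) := by
  by_cases hl : l.Pairwise (· ≤ ·)
  · rw [eq_sortedWord_count hl, ← monom_eq_prod_sortedWord]
    exact subset_span ⟨_, (length_sortedWord _).ge, rfl⟩
  obtain ⟨u, i, j, v, hij, hinv⟩ := exists_adjacent_inversion hl
  have hswap := hrel.list_prod_mem_span_monom (u ++ i :: j :: v)
  have hdrop := hrel.list_prod_mem_span_monom (u ++ v)
  have hmerge t := hrel.list_prod_mem_span_monom (u ++ t :: v)
  have hmono {l' : List (Fin n)} (h : l'.length ≤ (u ++ j :: i :: v).length) :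
      span K (monom x '' {α | ∑ i, α i ≤ l'.length}) ≤
        span K (monom x '' {α | ∑ i, α i ≤ (u ++ j :: i :: v).length}) :=
    span_mono (Set.image_mono fun α (hα : _ ≤ l'.length) => hα.trans h)
  subst hinv
  rw [hrel.list_prod_swap u v hij]
  refine sub_mem (sub_mem (smul_mem _ _ (hmono ?_ hswap)) (smul_mem _ _ (hmono ?_ hdrop)))
    (sum_mem fun t _ => smul_mem _ _ (hmono ?_ (hmerge t))) <;>
    · simp only [List.length_append, List.length_cons]; omega
termination_by (l.length, sortRank l)
decreasing_by
  all_goals subst hinv; simp only [List.length_append, List.length_cons]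
  · exact Prod.Lex.right _ (sortRank_swap_lt u v hij)
  · exact Prod.Lex.left _ _ (by omega)
  · exact Prod.Lex.left _ _ (by omega)

theorem SkewRelations.span_range_monom_eq_top (hrel : SkewRelations x c k0 kl)
    (hgen : Algebra.adjoin K (Set.range x) = ⊤) : span K (Set.range (monom x)) = ⊤ := by
  refine eq_top_iff.2 fun y _ => ?_
  have hy : y ∈ Subalgebra.toSubmodule (Algebra.adjoin K (Set.range x)) := by simp [hgen]
  rw [Algebra.adjoin_eq_span, ← FreeMonoid.mrange_lift] at hy
  refine span_le.2 ?_ hy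
  rintro _ ⟨w, rfl⟩
  rw [FreeMonoid.lift_apply]
  exact span_mono (Set.image_subset_range _ _) (hrel.list_prod_mem_span_monom w.toList)

end Spanning

section Quotient

variable {K : Type*} [Field K] (rel : FreeAlgebra K (Fin n) → FreeAlgebra K (Fin n) → Prop)

def quotGen : Fin n → RingQuot rel := fun i => RingQuot.mkAlgHom K rel (FreeAlgebra.ι K i)

theorem adjoin_range_quotGen : Algebra.adjoin K (Set.range (quotGen rel)) = ⊤ := by
  have hlift : FreeAlgebra.lift K (quotGen rel) = RingQuot.mkAlgHom K rel :=
    FreeAlgebra.hom_ext <| funext fun i => FreeAlgebra.lift_ι_apply _ _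
  rw [Algebra.adjoin_range_eq_range_freeAlgebra_lift, hlift, AlgHom.range_eq_top]
  exact RingQuot.mkAlgHom_surjective K rel

theorem quotDegFiltration_mono : Monotone (quotDegFiltration K n rel) :=
  fun _ _ h => AddSubgroup.closure_mono fun _ ⟨k, l, hl, ha⟩ => ⟨k, l, hl.trans h, ha⟩

theorem smul_list_prod_mem_quotDegFiltration (k : K) {l : List (Fin n)} {m : ℕ}
    (hl : l.length ≤ m) : k • (l.map (quotGen rel)).prod ∈ quotDegFiltration K n rel m :=
  AddSubgroup.subset_closure ⟨k, l, hl, rfl⟩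

theorem list_prod_mem_quotDegFiltration {l : List (Fin n)} {m : ℕ} (hl : l.length ≤ m) :
    (l.map (quotGen rel)).prod ∈ quotDegFiltration K n rel m := by
  simpa using smul_list_prod_mem_quotDegFiltration rel 1 hl

theorem quotGen_mem_quotDegFiltration (i : Fin n) :
    quotGen rel i ∈ quotDegFiltration K n rel 1 := by
  simpa using list_prod_mem_quotDegFiltration rel (l := [i]) le_rfl

theorem algebraMap_mem_quotDegFiltration (k : K) :
    algebraMap K (RingQuot rel) k ∈ quotDegFiltration K n rel 0 := by
  simpa [Algebra.algebraMap_eq_smul_one] using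
    smul_list_prod_mem_quotDegFiltration rel k (l := []) le_rfl

theorem monom_mem_quotDegFiltration (α : Fin n → ℕ) :
    monom (quotGen rel) α ∈ quotDegFiltration K n rel (∑ i, α i) := by
  rw [monom_eq_prod_sortedWord]
  exact list_prod_mem_quotDegFiltration rel (length_sortedWord α).le

theorem linearCombination_monom_mem_quotDegFiltration {m : ℕ} {κ : (Fin n → ℕ) →₀ K}
    (hκ : κ ∈ Finsupp.supported K K {α | ∑ i, α i ≤ m}) :
    Finsupp.linearCombination K (monom (quotGen rel)) κ ∈ quotDegFiltration K n rel m := by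
  rw [Finsupp.linearCombination_apply]
  refine AddSubgroup.sum_mem _ fun α hα => ?_
  dsimp only
  rw [monom_eq_prod_sortedWord]
  exact smul_list_prod_mem_quotDegFiltration rel _
    ((length_sortedWord α).trans_le ((Finsupp.mem_supported _ _).1 hκ hα))

variable {rel}

theorem SkewRelations.quotDegFiltration_le_span_monom {c k0 : Fin n → Fin n → K}
    {kl : Fin n → Fin n → Fin n → K} (hrel : SkewRelations (quotGen rel) c k0 kl) (m : ℕ) :
    quotDegFiltration K n rel m ≤
      (span K (monom (quotGen rel) '' {α | ∑ i, α i ≤ m})).toAddSubgroup := by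
  refine AddSubgroup.closure_le _ |>.2 ?_
  rintro _ ⟨k, l, hl, rfl⟩
  exact smul_mem _ k <| span_mono (Set.image_mono fun α (hα : _ ≤ l.length) => hα.trans hl)
    (hrel.list_prod_mem_span_monom l)

theorem skewRelations_constExtRel (c k0 : Fin n → Fin n → K) (kl : Fin n → Fin n → Fin n → K) :
    SkewRelations (quotGen (constExtRel K n c k0 kl)) c k0 kl := fun i j hij => by
  simpa only [quotGen, map_mul, map_sub, map_sum, map_smul, AlgHom.commutes] using
    RingQuot.mkAlgHom_rel K (s := constExtRel K n c k0 kl) ⟨i, j, hij, rfl, rfl⟩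

theorem skewRelations_homogRel (c : Fin n → Fin n → K) :
    SkewRelations (quotGen (homogRel K n c)) c 0 0 := fun i j hij => by
  simpa only [quotGen, map_mul, map_smul, Pi.zero_apply, map_zero, zero_smul,
    Finset.sum_const_zero, sub_zero] using
    RingQuot.mkAlgHom_rel K (s := homogRel K n c) ⟨i, j, hij, rfl, rfl⟩

end Quotient

section GradedMap

variable {K : Type*} [Field K] {rel : FreeAlgebra K (Fin n) → FreeAlgebra K (Fin n) → Prop}
  {hmul : ∀ {i j : ℕ} {a b : RingQuot rel}, a ∈ quotDegFiltration K n rel i →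
    b ∈ quotDegFiltration K n rel j → a * b ∈ quotDegFiltration K n rel (i + j)}
  {hone : (1 : RingQuot rel) ∈ quotDegFiltration K n rel 0} {G : Type*} [Ring G]
  (M : GrModel (quotDegFiltration K n rel) hmul hone G)
  {c k0 : Fin n → Fin n → K} {kl : Fin n → Fin n → Fin n → K}
  (hrel : SkewRelations (quotGen rel) c k0 kl)

def symbol (i : Fin n) : G := M.ψ 1 ⟨quotGen rel i, quotGen_mem_quotDegFiltration rel i⟩

def monomSymbol (α : Fin n → ℕ) : G :=
  M.ψ (∑ i, α i) ⟨monom (quotGen rel) α, monom_mem_quotDegFiltration rel α⟩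

include hrel in
theorem eq_zero_of_psi_linearCombination_eq_zero
    (hli : LinearIndependent K (monom (quotGen rel))) {m : ℕ} {κ : (Fin n → ℕ) →₀ K}
    (hκ : κ ∈ Finsupp.supported K K {α | ∑ i, α i = m})
    (h : Finsupp.linearCombination K (monom (quotGen rel)) κ ∈ quotDegFiltration K n rel m)
    (hψ : M.ψ m ⟨_, h⟩ = 0) : κ = 0 := by
  have hlow : Finsupp.linearCombination K (monom (quotGen rel)) κ ∈
      span K (monom (quotGen rel) '' {α | ∑ i, α i < m}) := by
    cases m with
    | zero =>
      have hzero : Finsupp.linearCombination K (monom (quotGen rel)) κ = 0 :=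
        (M.ker_zero ⟨_, h⟩).1 hψ
      rw [hzero]
      exact zero_mem _
    | succ m =>
      exact span_mono (Set.image_mono fun α (hα : _ ≤ m) => Nat.lt_succ_of_le hα)
        (hrel.quotDegFiltration_le_span_monom m ((M.ker_succ m _).1 hψ))
  have hdeg : Finsupp.linearCombination K (monom (quotGen rel)) κ ∈
      span K (monom (quotGen rel) '' {α | ∑ i, α i = m}) :=
    (Finsupp.mem_span_image_iff_linearCombination K).2 ⟨κ, hκ, rfl⟩
  have hdisj := hli.disjoint_span_image (s := {α | ∑ i, α i = m}) (t := {α | ∑ i, α i < m})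
    (Set.disjoint_left.2 fun α (h₁ : ∑ i, α i = m) (h₂ : ∑ i, α i < m) => h₂.ne h₁)
  exact linearIndependent_iff.1 hli κ (Submodule.disjoint_def.1 hdisj _ hdeg hlow)

variable [Algebra K G]
  (halg : ∀ (k : K) (h : algebraMap K (RingQuot rel) k ∈ quotDegFiltration K n rel 0),
    M.ψ 0 ⟨algebraMap K (RingQuot rel) k, h⟩ = algebraMap K G k)

include halg hrel in
theorem symbol_mul_symbol {i j : Fin n} (hij : i < j) :
    symbol M j * symbol M i = c i j • (symbol M i * symbol M j) := by
  refine M.psi_mul_psi_eq_smul_of_sub_mem halg (algebraMap_mem_quotDegFiltration rel) _ _ (c i j) ?_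
  have hlow : quotGen rel j * quotGen rel i - c i j • (quotGen rel i * quotGen rel j) =
      -(algebraMap K (RingQuot rel) (k0 i j) + ∑ t, kl i j t • quotGen rel t) := by
    rw [hrel i j hij]
    abel
  rw [hlow]
  refine neg_mem (add_mem ?_ (sum_mem fun t _ => ?_))
  · exact quotDegFiltration_mono rel (Nat.zero_le 1) (algebraMap_mem_quotDegFiltration rel _)
  · exact filtration_smul_mem (F := quotDegFiltration K n rel) hmul
      (algebraMap_mem_quotDegFiltration rel) _ (quotGen_mem_quotDegFiltration rel t)

def grMap : RingQuot (homogRel K n c) →ₐ[K] G :=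
  RingQuot.liftAlgHom K ⟨FreeAlgebra.lift K (symbol M), by
    rintro _ _ ⟨i, j, hij, rfl, rfl⟩
    simpa only [map_mul, map_smul, FreeAlgebra.lift_ι_apply] using
      symbol_mul_symbol M hrel halg hij⟩

theorem grMap_quotGen (i : Fin n) :
    grMap M hrel halg (quotGen (homogRel K n c) i) = symbol M i := by
  rw [grMap, quotGen, RingQuot.liftAlgHom_mkAlgHom_apply, FreeAlgebra.lift_ι_apply]

theorem psi_list_prod_eq_grMap (l : List (Fin n))
    (h : (l.map (quotGen rel)).prod ∈ quotDegFiltration K n rel l.length) :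
    M.ψ l.length ⟨(l.map (quotGen rel)).prod, h⟩ =
      grMap M hrel halg (l.map (quotGen (homogRel K n c))).prod := by
  simp only [map_list_prod, List.map_map, Function.comp_def, grMap_quotGen]
  exact M.psi_list_prod _ l

theorem psi_mem_range_grMap {m : ℕ} (a : quotDegFiltration K n rel m) :
    M.ψ m a ∈ (grMap M hrel halg).range := by
  obtain ⟨a, ha⟩ := a
  induction ha using AddSubgroup.closure_induction with
  | mem _ hgen =>
    obtain ⟨k, l, hl, rfl⟩ := hgen
    change M.ψ m ⟨k • (l.map (quotGen rel)).prod, _⟩ ∈ _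
    rw [M.psi_smul halg (algebraMap_mem_quotDegFiltration rel) k
      (list_prod_mem_quotDegFiltration rel hl)]
    refine Subalgebra.smul_mem _ ?_ k
    rcases hl.lt_or_eq with hlt | rfl
    · rw [M.psi_eq_zero_of_mem_of_lt (quotDegFiltration_mono rel) hlt _
        (list_prod_mem_quotDegFiltration rel le_rfl)]
      exact zero_mem _
    · rw [psi_list_prod_eq_grMap M hrel halg]
      exact AlgHom.mem_range_self _ _
  | zero =>
    change M.ψ m 0 ∈ _
    rw [map_zero]
    exact zero_mem _
  | add _ _ ha hb iha ihb =>
    change M.ψ m (⟨_, ha⟩ + ⟨_, hb⟩) ∈ _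
    rw [map_add]
    exact add_mem iha ihb
  | neg _ ha iha =>
    change M.ψ m (-⟨_, ha⟩) ∈ _
    rw [map_neg]
    exact neg_mem iha

theorem grMap_surjective : Function.Surjective (grMap M hrel halg) := fun g => by
  obtain ⟨N, a, rfl⟩ := M.decomp g
  exact sum_mem fun m _ => psi_mem_range_grMap M hrel halg (a m)

theorem grMap_monom (α : Fin n → ℕ) :
    grMap M hrel halg (monom (quotGen (homogRel K n c)) α) = monomSymbol M α := by
  rw [monom_eq_prod_sortedWord, ← psi_list_prod_eq_grMap M hrel halg _
    (list_prod_mem_quotDegFiltration rel le_rfl)]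
  exact M.psi_congr (length_sortedWord α) (monom_eq_prod_sortedWord _ α).symm _ _

include halg in
theorem psi_linearCombination {m : ℕ} {κ : (Fin n → ℕ) →₀ K}
    (hκ : κ ∈ Finsupp.supported K K {α | ∑ i, α i = m})
    (h : Finsupp.linearCombination K (monom (quotGen rel)) κ ∈ quotDegFiltration K n rel m) :
    M.ψ m ⟨Finsupp.linearCombination K (monom (quotGen rel)) κ, h⟩ =
      Finsupp.linearCombination K (monomSymbol M) κ := by
  have hmem {κ'} (hκ' : κ' ∈ span K ((Finsupp.single · (1 : K)) '' {α | ∑ i, α i = m})) :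
      Finsupp.linearCombination K (monom (quotGen rel)) κ' ∈ quotDegFiltration K n rel m := by
    rw [← Finsupp.supported_eq_span_single] at hκ'
    exact linearCombination_monom_mem_quotDegFiltration rel
      (Finsupp.supported_mono (fun α (hα : _ = m) => hα.le) hκ')
  rw [Finsupp.supported_eq_span_single] at hκ
  induction hκ using Submodule.span_induction with
  | mem _ hα =>
    obtain ⟨α, hα, rfl⟩ := hα
    calc M.ψ m ⟨_, h⟩ = monomSymbol M α := M.psi_congr hα.symm (by simp) h _
      _ = _ := by simp
  | zero =>
    calc M.ψ m ⟨_, h⟩ = M.ψ m 0 := M.psi_congr rfl (map_zero _) _ _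
      _ = _ := by rw [map_zero, map_zero]
  | add κ₁ κ₂ h₁ h₂ ih₁ ih₂ =>
    calc M.ψ m ⟨_, h⟩ = M.ψ m (⟨_, hmem h₁⟩ + ⟨_, hmem h₂⟩) :=
          M.psi_congr rfl (map_add _ _ _) _ _
      _ = _ := by rw [map_add, ih₁, ih₂, map_add]
  | smul a κ hκ ih =>
    have halgF := algebraMap_mem_quotDegFiltration rel
    calc M.ψ m ⟨_, h⟩ = M.ψ m ⟨a • _, filtration_smul_mem (F := quotDegFiltration K n rel) hmul
          halgF a (hmem hκ)⟩ := M.psi_congr rfl (map_smul _ _ _) _ _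
      _ = _ := by rw [M.psi_smul halg halgF a (hmem hκ), ih, map_smul]

include halg hrel in
theorem linearIndependent_monomSymbol (hli : LinearIndependent K (monom (quotGen rel))) :
    LinearIndependent K (monomSymbol M) := by
  classical
  refine linearIndependent_iff.2 fun κ hκ => ?_
  let piece (m : ℕ) := κ.filter fun α => ∑ i, α i = m
  have hpiece (m : ℕ) : piece m ∈ Finsupp.supported K K {α | ∑ i, α i = m} := by
    simp [piece, Finsupp.mem_supported, Finsupp.support_filter]
  have hmem (m : ℕ) := linearCombination_monom_mem_quotDegFiltration rel
    (Finsupp.supported_mono (fun α (hα : _ = m) => hα.le) (hpiece m))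
  obtain ⟨N, hN⟩ : ∃ N, ∀ α ∈ κ.support, ∑ i, α i < N :=
    ⟨κ.support.sup (fun α => ∑ i, α i) + 1, fun α hα => Nat.lt_succ_of_le (Finset.le_sup hα)⟩
  have hsum : ∑ m ∈ Finset.range N, piece m = κ := by
    ext α
    simp only [piece, Finsupp.coe_finsetSum, Finset.sum_apply, Finsupp.filter_apply,
      Finset.sum_ite_eq, Finset.mem_range]
    split_ifs with h
    · rfl
    · exact (Finsupp.notMem_support_iff.1 fun hα => h (hN α hα)).symm
  have hψ := M.indep N (fun m => ⟨_, hmem m⟩) <| by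
    simp_rw [psi_linearCombination M halg (hpiece _)]
    rw [← map_sum, hsum, hκ]
  rw [← hsum]
  exact Finset.sum_eq_zero fun m hm => eq_zero_of_psi_linearCombination_eq_zero M hrel hli
    (hpiece m) _ (hψ m (Finset.mem_range.1 hm))

theorem grMap_injective (hli : LinearIndependent K (monom (quotGen rel))) :
    Function.Injective (grMap M hrel halg) := by
  refine (injective_iff_map_eq_zero _).2 fun u hu => ?_
  have hspan : Function.Surjective
      (Finsupp.linearCombination K (monom (quotGen (homogRel K n c)))) := by
    rw [← LinearMap.range_eq_top, Finsupp.range_linearCombination]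
    exact (skewRelations_homogRel c).span_range_monom_eq_top (adjoin_range_quotGen _)
  obtain ⟨κ, rfl⟩ := hspan u
  have hcomp : (grMap M hrel halg).toLinearMap ∘ monom (quotGen (homogRel K n c)) =
      monomSymbol M :=
    funext (grMap_monom M hrel halg)
  rw [← AlgHom.coe_toLinearMap, Finsupp.apply_linearCombination, hcomp] at hu
  rw [linearIndependent_iff.1 (linearIndependent_monomSymbol M hrel halg hli) κ hu, map_zero]

end GradedMap

end ConstSkewPBW

theorem constant_skewPBW_is_PBW_deformation_general (K : Type*) [Field K] (n : ℕ)
    (c : Fin n → Fin n → K) (k0 : Fin n → Fin n → K) (kl : Fin n → Fin n → Fin n → K)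
    -- `A` is a skew PBW extension: the standard monomials form a `K`-basis of `A`
    (hbasisA : ∃ b : Module.Basis (Fin n → ℕ) K (RingQuot (constExtRel K n c k0 kl)),
      ∀ α : Fin n → ℕ, b α = monom (fun i => RingQuot.mkAlgHom K (constExtRel K n c k0 kl)
        (FreeAlgebra.ι K i)) α)
    (hmul : ∀ {i j : ℕ} {a b : RingQuot (constExtRel K n c k0 kl)},
      a ∈ quotDegFiltration K n (constExtRel K n c k0 kl) i →
      b ∈ quotDegFiltration K n (constExtRel K n c k0 kl) j →
      a * b ∈ quotDegFiltration K n (constExtRel K n c k0 kl) (i + j))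
    (hone : (1 : RingQuot (constExtRel K n c k0 kl)) ∈
      quotDegFiltration K n (constExtRel K n c k0 kl) 0)
    -- `G` is (a model of) the associated graded algebra `Gr(A)`
    (G : Type*) [Ring G] [Algebra K G]
    (M : GrModel (quotDegFiltration K n (constExtRel K n c k0 kl)) hmul hone G)
    (halg : ∀ (k : K) (h : algebraMap K (RingQuot (constExtRel K n c k0 kl)) k ∈
        quotDegFiltration K n (constExtRel K n c k0 kl) 0),
      M.ψ 0 ⟨algebraMap K (RingQuot (constExtRel K n c k0 kl)) k, h⟩ = algebraMap K G k) :
    ∃ f : RingQuot (homogRel K n c) ≃ₐ[K] G,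
      ∀ (i : Fin n) (h : RingQuot.mkAlgHom K (constExtRel K n c k0 kl) (FreeAlgebra.ι K i) ∈
          quotDegFiltration K n (constExtRel K n c k0 kl) 1),
        f (RingQuot.mkAlgHom K (homogRel K n c) (FreeAlgebra.ι K i)) =
          M.ψ 1 ⟨RingQuot.mkAlgHom K (constExtRel K n c k0 kl) (FreeAlgebra.ι K i), h⟩ := by
  obtain ⟨b, hb⟩ := hbasisA
  have hli : LinearIndependent K (monom (ConstSkewPBW.quotGen (constExtRel K n c k0 kl))) :=
    funext hb ▸ b.linearIndependent
  have hrel := ConstSkewPBW.skewRelations_constExtRel c k0 kl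
  exact ⟨AlgEquiv.ofBijective (ConstSkewPBW.grMap M hrel halg)
      ⟨ConstSkewPBW.grMap_injective M hrel halg hli, ConstSkewPBW.grMap_surjective M hrel halg⟩,
    fun i _ => ConstSkewPBW.grMap_quotGen M hrel halg i⟩

/-- **Proposition 4.5.**  Let `A = K⟨x₁,…,xₙ⟩/⟨P⟩` be a constant skew PBW extension of a
field `K`, with `P` spanned by the elements `xⱼxᵢ − c_{ij} xᵢxⱼ + r₀ + r₁x₁ + ⋯ + rₙxₙ`
(`c_{ij} ≠ 0`), and let `B = K⟨x₁,…,xₙ⟩/⟨xⱼxᵢ − c_{ij} xᵢxⱼ⟩` be its homogeneous version.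
Then `A` is a PBW deformation of `B`: the natural graded map `p : B → Gr(A)` (sending each
generator `xᵢ` to the degree-one symbol of `xᵢ`) is an isomorphism. -/
theorem constant_skewPBW_is_PBW_deformation (K : Type*) [Field K] (n : ℕ)
    (c : Fin n → Fin n → K) (k0 : Fin n → Fin n → K) (kl : Fin n → Fin n → Fin n → K)
    (hc : ∀ i j : Fin n, i < j → c i j ≠ 0)
    -- `A` is a skew PBW extension: the standard monomials form a `K`-basis of `A`
    (hbasisA : ∃ b : Module.Basis (Fin n → ℕ) K (RingQuot (constExtRel K n c k0 kl)),
      ∀ α : Fin n → ℕ, b α = monom (fun i => RingQuot.mkAlgHom K (constExtRel K n c k0 kl)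
        (FreeAlgebra.ι K i)) α)
    (hmul : ∀ {i j : ℕ} {a b : RingQuot (constExtRel K n c k0 kl)},
      a ∈ quotDegFiltration K n (constExtRel K n c k0 kl) i →
      b ∈ quotDegFiltration K n (constExtRel K n c k0 kl) j →
      a * b ∈ quotDegFiltration K n (constExtRel K n c k0 kl) (i + j))
    (hone : (1 : RingQuot (constExtRel K n c k0 kl)) ∈
      quotDegFiltration K n (constExtRel K n c k0 kl) 0)
    -- `G` is (a model of) the associated graded algebra `Gr(A)`
    (G : Type*) [Ring G] [Algebra K G]
    (M : GrModel (quotDegFiltration K n (constExtRel K n c k0 kl)) hmul hone G)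
    (halg : ∀ (k : K) (h : algebraMap K (RingQuot (constExtRel K n c k0 kl)) k ∈
        quotDegFiltration K n (constExtRel K n c k0 kl) 0),
      M.ψ 0 ⟨algebraMap K (RingQuot (constExtRel K n c k0 kl)) k, h⟩ = algebraMap K G k) :
    ∃ f : RingQuot (homogRel K n c) ≃ₐ[K] G,
      ∀ (i : Fin n) (h : RingQuot.mkAlgHom K (constExtRel K n c k0 kl) (FreeAlgebra.ι K i) ∈
          quotDegFiltration K n (constExtRel K n c k0 kl) 1),
        f (RingQuot.mkAlgHom K (homogRel K n c) (FreeAlgebra.ι K i)) =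
          M.ψ 1 ⟨RingQuot.mkAlgHom K (constExtRel K n c k0 kl) (FreeAlgebra.ι K i), h⟩ :=
  constant_skewPBW_is_PBW_deformation_general K n c k0 kl hbasisA hmul hone G M halg
end

section
/- Let g be a Lie algebra over a field K and f : g × g → K a 2-cocycle, i.e., f is bilinear, f(x,x) = 0, and f(x,[y,z]) + f(z,[x,y]) + f(y,[z,x]) = 0 for all x,y,z ∈ g. If g is finite-dimensional with basis x_1,…,x_n, then the Sridharan enveloping algebra U_f(g) = T(g)/⟨x⊗y − y⊗x − [x,y] − f(x,y) : x,y ∈ g⟩ has the standard monomials x_1^{α_1}⋯x_n^{α_n} (α ∈ ℕ^n) as a K-vector space basis. -/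
/-- The defining relations `x⊗y − y⊗x = [x,y] + f(x,y)` of the Sridharan enveloping algebra
`U_f(g)`, as a relation on the tensor algebra `T(g)`. -/
def sridharanRel (K : Type*) [Field K] (g : Type*) [LieRing g] [LieAlgebra K g]
    (f : g →ₗ[K] g →ₗ[K] K) : TensorAlgebra K g → TensorAlgebra K g → Prop :=
  fun u v => ∃ x y : g, u = TensorAlgebra.ι K x * TensorAlgebra.ι K y ∧
    v = TensorAlgebra.ι K y * TensorAlgebra.ι K x + TensorAlgebra.ι K ⁅x, y⁆ +
        algebraMap K (TensorAlgebra K g) (f x y)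

open Finsupp

namespace Sridharan

section Defect

variable {R g V : Type*} [CommRing R] [LieRing g] [LieAlgebra R g] [AddCommGroup V] [Module R V]
  (ρ : g →ₗ[R] Module.End R V) (f : g →ₗ[R] g →ₗ[R] R)

noncomputable def defect : g →ₗ[R] g →ₗ[R] Module.End R V :=
  LinearMap.mk₂ R (fun x y => ρ x * ρ y - ρ y * ρ x - ρ ⁅x, y⁆ - f x y • 1)
    (fun x x' y => by
      simp only [map_add, add_lie, LinearMap.add_apply, add_mul, mul_add, add_smul]; abel)
    (fun c x y => by
      simp only [map_smul, smul_lie, LinearMap.smul_apply, smul_mul_assoc, mul_smul_comm, smul_sub,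
        smul_eq_mul, mul_smul])
    (fun x y y' => by
      simp only [map_add, lie_add, add_mul, mul_add, add_smul]; abel)
    (fun c x y => by
      simp only [map_smul, lie_smul, smul_mul_assoc, mul_smul_comm, smul_sub, smul_eq_mul,
        mul_smul])

theorem defect_apply (x y : g) :
    defect ρ f x y = ρ x * ρ y - ρ y * ρ x - ρ ⁅x, y⁆ - f x y • 1 := rfl

variable {ρ f}

theorem defect_self (halt : ∀ x, f x x = 0) (x : g) : defect ρ f x x = 0 := by
  simp [defect_apply, halt]

theorem defect_swap (halt : ∀ x, f x x = 0) (x y : g) : defect ρ f y x = -defect ρ f x y := by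
  have hskew : f y x = -f x y := by
    have h := halt (x + y)
    simp only [map_add, LinearMap.add_apply, halt] at h
    linear_combination h
  rw [defect_apply, defect_apply, ← lie_skew, map_neg, hskew, neg_smul]
  abel

theorem defect_apply_eq_zero_of_basis {ι : Type*} (b : Module.Basis ι R g) {v : V}
    (h : ∀ i j, defect ρ f (b i) (b j) v = 0) (x y : g) : defect ρ f x y v = 0 :=
  LinearMap.congr_fun₂
    (LinearMap.ext_basis b b h : (defect ρ f).compr₂ (LinearMap.applyₗ v) = 0) x y

/-- After commuting `ρ z` to the left, the remaining terms cancel by the Jacobi identity and the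
cocycle condition. -/
theorem defect_apply_eq_zero_of_jacobi
    (hcocycle : ∀ x y z : g, f x ⁅y, z⁆ + f z ⁅x, y⁆ + f y ⁅z, x⁆ = 0) {x y z : g} {v : V}
    (hv : ∀ a b, defect ρ f a b v = 0) (hxz : defect ρ f x z (ρ y v) = 0)
    (hyz : defect ρ f y z (ρ x v) = 0) : defect ρ f x y (ρ z v) = 0 := by
  have hx := congrArg (ρ x) (hv y z)
  have hy := congrArg (ρ y) (hv x z)
  have hz := congrArg (ρ z) (hv x y)
  have h1 := hv z ⁅x, y⁆
  have h2 := hv x ⁅y, z⁆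
  have h3 := hv y ⁅z, x⁆
  have hzx : ρ ⁅z, x⁆ = -ρ ⁅x, z⁆ := by rw [← map_neg, lie_skew]
  have hjac : ρ ⁅x, ⁅y, z⁆⁆ v + ρ ⁅y, ⁅z, x⁆⁆ v + ρ ⁅z, ⁅x, y⁆⁆ v = 0 := by
    rw [← LinearMap.add_apply, ← LinearMap.add_apply, ← map_add, ← map_add, lie_jacobi, map_zero,
      LinearMap.zero_apply]
  have hcoc : (f x ⁅y, z⁆ + f z ⁅x, y⁆ + f y ⁅z, x⁆) • v = 0 := by rw [hcocycle, zero_smul]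
  simp only [defect_apply, LinearMap.sub_apply, Module.End.mul_apply, LinearMap.smul_apply,
    Module.End.one_apply, map_sub, map_smul, map_zero, hzx, LinearMap.neg_apply, map_neg] at *
  linear_combination (norm := module) hx + hxz - hy - hyz + hz + h1 + h2 + h3 + hjac + hcoc

theorem mul_eq_of_defect_eq_zero (h : defect ρ f = 0) (x y : g) :
    ρ x * ρ y = ρ y * ρ x + ρ ⁅x, y⁆ + f x y • 1 := by
  have hxy : defect ρ f x y = 0 := LinearMap.congr_fun₂ h x y
  rw [defect_apply, sub_sub, sub_sub, sub_eq_zero] at hxy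
  rw [hxy, add_assoc]

end Defect

section Lift

variable {K g V : Type*} [Field K] [LieRing g] [LieAlgebra K g] [AddCommGroup V] [Module K V]
  {ρ : g →ₗ[K] Module.End K V} {f : g →ₗ[K] g →ₗ[K] K}

noncomputable def liftOfDefectEqZero (h : defect ρ f = 0) :
    RingQuot (sridharanRel K g f) →ₐ[K] Module.End K V :=
  RingQuot.liftAlgHom K ⟨TensorAlgebra.lift K ρ, by
    rintro _ _ ⟨x, y, rfl, rfl⟩
    simp only [map_mul, map_add, TensorAlgebra.lift_ι_apply, AlgHom.commutes]
    rw [Algebra.algebraMap_eq_smul_one]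
    exact mul_eq_of_defect_eq_zero h x y⟩

theorem liftOfDefectEqZero_mk_ι (h : defect ρ f = 0) (x : g) :
    liftOfDefectEqZero h (RingQuot.mkAlgHom K (sridharanRel K g f) (TensorAlgebra.ι K x))
      = ρ x := by
  rw [liftOfDefectEqZero, RingQuot.liftAlgHom_mkAlgHom_apply, TensorAlgebra.lift_ι_apply]

end Lift

section MultiIndex

variable {n : ℕ}

def deg (α : Fin n → ℕ) : ℕ := ∑ j, α j

/-- `x_i x^α` is again a standard monomial. -/
abbrev LeSupport (i : Fin n) (α : Fin n → ℕ) : Prop := ∀ j < i, α j = 0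

/-- The least index occurring in `α`; the fallback `i` is returned only when `α = 0`. -/
noncomputable def minIndex (α : Fin n → ℕ) (i : Fin n) : Fin n :=
  if h : ∃ j, α j ≠ 0 then wellFounded_lt.min {j | α j ≠ 0} h else i

theorem deg_add_single (α : Fin n → ℕ) (i : Fin n) : deg (α + Pi.single i 1) = deg α + 1 := by
  simp [deg, Finset.sum_add_distrib]

theorem sub_single_add_single {α : Fin n → ℕ} {j : Fin n} (h : α j ≠ 0) :
    α - Pi.single j 1 + Pi.single j 1 = α := by
  funext k
  rcases eq_or_ne k j with rfl | hk
  · simp only [Pi.add_apply, Pi.sub_apply, Pi.single_eq_same]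
    omega
  · simp [hk]

theorem deg_sub_single {α : Fin n → ℕ} {j : Fin n} (h : α j ≠ 0) :
    deg (α - Pi.single j 1) + 1 = deg α := by
  rw [← deg_add_single, sub_single_add_single h]

theorem minIndex_le {α : Fin n → ℕ} {j : Fin n} (h : α j ≠ 0) (i : Fin n) : minIndex α i ≤ j := by
  rw [minIndex, dif_pos ⟨j, h⟩]
  exact not_lt.mp (wellFounded_lt.not_lt_min _ h)

theorem apply_minIndex_ne_zero {α : Fin n → ℕ} {j : Fin n} (h : α j ≠ 0) (i : Fin n) :
    α (minIndex α i) ≠ 0 := by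
  rw [minIndex, dif_pos ⟨j, h⟩]
  exact wellFounded_lt.min_mem {j | α j ≠ 0} _

theorem leSupport_minIndex (α : Fin n → ℕ) (i : Fin n) : LeSupport (minIndex α i) α :=
  fun _ hj => by_contra fun h => (minIndex_le h i).not_gt hj

theorem minIndex_lt {α : Fin n → ℕ} {i : Fin n} (h : ¬LeSupport i α) : minIndex α i < i := by
  obtain ⟨j, hji, hj⟩ := not_forall₂.mp h
  exact (minIndex_le hj i).trans_lt hji

theorem apply_minIndex_ne_zero_of_not_leSupport {α : Fin n → ℕ} {i : Fin n}
    (h : ¬LeSupport i α) : α (minIndex α i) ≠ 0 := by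
  obtain ⟨j, -, hj⟩ := not_forall₂.mp h
  exact apply_minIndex_ne_zero hj i

theorem minIndex_eq {α : Fin n → ℕ} {j : Fin n} (h : α j ≠ 0) (hj : LeSupport j α) (i : Fin n) :
    minIndex α i = j :=
  (minIndex_le h i).antisymm (not_lt.mp fun hlt => apply_minIndex_ne_zero h i (hj _ hlt))

theorem LeSupport.tsub {i : Fin n} {α : Fin n → ℕ} (h : LeSupport i α) (β : Fin n → ℕ) :
    LeSupport i (α - β) :=
  fun j hj => by simp [h j hj]

theorem LeSupport.add_single {i c : Fin n} {α : Fin n → ℕ} (h : LeSupport i α) (hic : i ≤ c) :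
    LeSupport i (α + Pi.single c 1) :=
  fun j hj => by simp [h j hj, (hj.trans_le hic).ne]

theorem not_leSupport_add_single {i j : Fin n} (hji : j < i) (α : Fin n → ℕ) :
    ¬LeSupport i (α + Pi.single j 1) :=
  fun h => by simpa using h j hji

end MultiIndex

section Monom

variable {A : Type*} [Monoid A] {n : ℕ}

theorem monom_zero (x : Fin n → A) : monom x 0 = 1 := by
  simp [monom]

theorem map_monom {B F : Type*} [Monoid B] [FunLike F A B] [MonoidHomClass F A B] (φ : F)
    (x : Fin n → A) (α : Fin n → ℕ) :
    φ (monom x α) = monom (φ ∘ x) α := by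
  simp [monom, map_list_prod, List.map_ofFn, Function.comp_def]

theorem monom_succ (x : Fin (n + 1) → A) (α : Fin (n + 1) → ℕ) :
    monom x α = x 0 ^ α 0 * monom (x ∘ Fin.succ) (α ∘ Fin.succ) := by
  rw [monom, List.ofFn_succ, List.prod_cons]
  rfl

theorem mul_monom_of_leSupport (x : Fin n → A) {α : Fin n → ℕ} {i : Fin n} (h : LeSupport i α) :
    x i * monom x α = monom x (α + Pi.single i 1) := by
  induction n with
  | zero => exact i.elim0
  | succ n ih =>
    rw [monom_succ, monom_succ]
    cases i using Fin.cases with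
    | zero =>
      have htail : (α + Pi.single 0 1) ∘ Fin.succ = α ∘ Fin.succ := by
        funext j
        simp [Fin.succ_ne_zero]
      simp [htail, ← mul_assoc, pow_succ']
    | succ i =>
      have htail : (α + Pi.single i.succ 1) ∘ Fin.succ = α ∘ Fin.succ + Pi.single i 1 := by
        funext j
        simp [Pi.single_apply, Fin.succ_inj]
      have hhead : (α + Pi.single i.succ 1 : Fin (n + 1) → ℕ) 0 = α 0 := by
        simp
      rw [htail, hhead, h 0 (Fin.succ_pos i), pow_zero, one_mul, one_mul]
      exact ih (x ∘ Fin.succ) fun j hj => h j.succ (Fin.succ_lt_succ_iff.mpr hj)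

end Monom

section DegreeFiltration

variable (R : Type*) [Semiring R] (n : ℕ)

def degLE (N : ℕ) : Submodule R ((Fin n → ℕ) →₀ R) := supported R R {γ | deg γ ≤ N}

variable {R n}

theorem single_mem_degLE {γ : Fin n → ℕ} {N : ℕ} (h : deg γ ≤ N) (c : R) :
    single γ c ∈ degLE R n N :=
  single_mem_supported R c h

theorem degLE_mono {N N' : ℕ} (h : N ≤ N') : degLE R n N ≤ degLE R n N' :=
  supported_mono fun _ hγ => le_trans hγ h

theorem eqOn_degLE {M : Type*} [AddCommMonoid M] [Module R M]
    {T T' : ((Fin n → ℕ) →₀ R) →ₗ[R] M} {N : ℕ}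
    (h : ∀ γ, deg γ ≤ N → T (single γ 1) = T' (single γ 1)) {p : (Fin n → ℕ) →₀ R}
    (hp : p ∈ degLE R n N) : T p = T' p := by
  rw [degLE, supported_eq_span_single] at hp
  exact LinearMap.eqOn_span' (by rintro _ ⟨γ, hγ, rfl⟩; exact h γ hγ) hp

theorem map_mem_degLE {T : ((Fin n → ℕ) →₀ R) →ₗ[R] (Fin n → ℕ) →₀ R} {N N' : ℕ}
    (h : ∀ γ, deg γ ≤ N → T (single γ 1) ∈ degLE R n N') {p : (Fin n → ℕ) →₀ R}
    (hp : p ∈ degLE R n N) : T p ∈ degLE R n N' := by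
  rw [degLE, supported_eq_span_single] at hp
  exact (Submodule.span_le (p := (degLE R n N').comap T)).mpr
    (by rintro _ ⟨γ, hγ, rfl⟩; exact h γ hγ) hp

end DegreeFiltration

section Action

variable {R g : Type*} [CommRing R] [LieRing g] [LieAlgebra R g] {n : ℕ}
  (bs : Module.Basis (Fin n) R g) (f : g →ₗ[R] g →ₗ[R] R)

/-- `x_i · z^α` computed by straightening; the value is correct once the fuel `d` exceeds
`deg α`. -/
noncomputable def actAux : ℕ → Fin n → (Fin n → ℕ) → ((Fin n → ℕ) →₀ R)
  | 0, _, _ => 0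
  | d + 1, i, α =>
    if h : LeSupport i α then single (α + Pi.single i 1) 1
    else
      let j := minIndex α i
      let β := α - Pi.single j 1
      linearCombination R (actAux (d + 1) j) (actAux d i β)
        + linearCombination R (actAux d · β) (bs.repr ⁅bs i, bs j⁆) + f (bs i) (bs j) • single β 1
  termination_by d i => (d, i.val)
  decreasing_by
    all_goals first
      | exact Prod.Lex.left _ _ (Nat.lt_succ_self d)
      | exact Prod.Lex.right _ (minIndex_lt h)

variable {bs f}

theorem actAux_of_leSupport (d : ℕ) {i : Fin n} {α : Fin n → ℕ} (h : LeSupport i α) :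
    actAux bs f (d + 1) i α = single (α + Pi.single i 1) 1 := by
  rw [actAux, dif_pos h]

theorem actAux_of_not_leSupport (d : ℕ) {i : Fin n} {α : Fin n → ℕ} (h : ¬LeSupport i α) :
    actAux bs f (d + 1) i α =
      linearCombination R (actAux bs f (d + 1) (minIndex α i))
          (actAux bs f d i (α - Pi.single (minIndex α i) 1))
        + linearCombination R (actAux bs f d · (α - Pi.single (minIndex α i) 1))
            (bs.repr ⁅bs i, bs (minIndex α i)⁆)
        + f (bs i) (bs (minIndex α i)) • single (α - Pi.single (minIndex α i) 1) 1 := by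
  rw [actAux, dif_neg h]

theorem actAux_mem_degLE :
    ∀ (d : ℕ) (i : Fin n) (α : Fin n → ℕ), actAux bs f d i α ∈ degLE R n (deg α + 1)
  | 0, _, _ => by simp [actAux]
  | d + 1, i, α => by
    by_cases h : LeSupport i α
    · rw [actAux_of_leSupport d h]
      exact single_mem_degLE (deg_add_single α i).le 1
    · have hj := minIndex_lt h
      have hdeg := deg_sub_single (apply_minIndex_ne_zero_of_not_leSupport h)
      rw [actAux_of_not_leSupport d h]
      set β := α - Pi.single (minIndex α i) 1
      refine add_mem (add_mem ?_ ?_)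
        (Submodule.smul_mem _ _ (single_mem_degLE (γ := β) (by omega) 1))
      · refine map_mem_degLE (N := deg β + 1) (fun γ hγ => ?_) (actAux_mem_degLE d i β)
        rw [linearCombination_single, one_smul]
        exact degLE_mono (by omega) (actAux_mem_degLE (d + 1) (minIndex α i) γ)
      · rw [linearCombination_apply]
        exact Submodule.finsuppSum_mem R (degLE R n (deg α + 1)) _ _ fun k _ =>
          Submodule.smul_mem _ _ (degLE_mono (by omega) (actAux_mem_degLE d k β))
  termination_by d i => (d, i.val)
  decreasing_by
    all_goals first
      | exact Prod.Lex.left _ _ (Nat.lt_succ_self d)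
      | exact Prod.Lex.right _ hj

theorem actAux_congr_fuel :
    ∀ (d d' : ℕ) (i : Fin n) (α : Fin n → ℕ), deg α < d → deg α < d' →
      actAux bs f d i α = actAux bs f d' i α
  | 0, _, _, _, hd, _ | _, 0, _, _, _, hd => absurd hd (Nat.not_lt_zero _)
  | d + 1, d' + 1, i, α, hd, hd' => by
    by_cases h : LeSupport i α
    · rw [actAux_of_leSupport d h, actAux_of_leSupport d' h]
    · have hj := minIndex_lt h
      have hdeg := deg_sub_single (apply_minIndex_ne_zero_of_not_leSupport h)
      rw [actAux_of_not_leSupport d h, actAux_of_not_leSupport d' h,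
        actAux_congr_fuel d d' i _ (by omega) (by omega)]
      congr 2
      · refine eqOn_degLE (fun γ hγ => ?_) (actAux_mem_degLE d' i _)
        simp only [linearCombination_single, one_smul]
        exact actAux_congr_fuel (d + 1) (d' + 1) (minIndex α i) γ (by omega) (by omega)
      · congr 2
        funext k
        exact actAux_congr_fuel d d' k _ (by omega) (by omega)
  termination_by d _ i => (d, i.val)
  decreasing_by
    all_goals first
      | exact Prod.Lex.left _ _ (Nat.lt_succ_self d)
      | exact Prod.Lex.right _ hj

variable (bs f)

noncomputable def basisAct (i : Fin n) : Module.End R ((Fin n → ℕ) →₀ R) :=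
  linearCombination R fun α => actAux bs f (deg α + 1) i α

noncomputable def rep : g →ₗ[R] Module.End R ((Fin n → ℕ) →₀ R) :=
  bs.constr R (basisAct bs f)

variable {bs f}

theorem basisAct_single (i : Fin n) (α : Fin n → ℕ) :
    basisAct bs f i (single α 1) = actAux bs f (deg α + 1) i α := by
  rw [basisAct, linearCombination_single, one_smul]

theorem rep_basis (i : Fin n) : rep bs f (bs i) = basisAct bs f i :=
  bs.constr_basis R _ i

theorem rep_apply (z : g) (p : (Fin n → ℕ) →₀ R) :
    rep bs f z p = linearCombination R (fun k => basisAct bs f k p) (bs.repr z) := by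
  rw [rep, Module.Basis.constr_apply, LinearMap.finsupp_sum_apply, linearCombination_apply]
  rfl

theorem basisAct_mem_degLE (i : Fin n) {N : ℕ} {p : (Fin n → ℕ) →₀ R} (hp : p ∈ degLE R n N) :
    basisAct bs f i p ∈ degLE R n (N + 1) :=
  map_mem_degLE (fun γ hγ => by
    rw [basisAct_single]
    exact degLE_mono (by omega) (actAux_mem_degLE _ i γ)) hp

theorem rep_mem_degLE (z : g) {N : ℕ} {p : (Fin n → ℕ) →₀ R} (hp : p ∈ degLE R n N) :
    rep bs f z p ∈ degLE R n (N + 1) := by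
  rw [rep_apply, linearCombination_apply]
  exact Submodule.finsuppSum_mem R _ _ _ fun k _ =>
    Submodule.smul_mem _ _ (basisAct_mem_degLE k hp)

theorem basisAct_single_of_leSupport {i : Fin n} {α : Fin n → ℕ} (h : LeSupport i α) :
    basisAct bs f i (single α 1) = single (α + Pi.single i 1) 1 := by
  rw [basisAct_single, actAux_of_leSupport _ h]

theorem basisAct_single_of_not_leSupport {i : Fin n} {α : Fin n → ℕ} (h : ¬LeSupport i α) :
    basisAct bs f i (single α 1) =
      basisAct bs f (minIndex α i) (basisAct bs f i (single (α - Pi.single (minIndex α i) 1) 1))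
        + rep bs f ⁅bs i, bs (minIndex α i)⁆ (single (α - Pi.single (minIndex α i) 1) 1)
        + f (bs i) (bs (minIndex α i)) • single (α - Pi.single (minIndex α i) 1) 1 := by
  have hdeg := deg_sub_single (apply_minIndex_ne_zero_of_not_leSupport h)
  rw [basisAct_single, actAux_of_not_leSupport _ h, basisAct_single, hdeg, rep_apply]
  congr 2
  · refine eqOn_degLE (N := deg α) (fun γ hγ => ?_) (hdeg ▸ actAux_mem_degLE _ i _)
    rw [linearCombination_single, one_smul, basisAct_single]
    exact actAux_congr_fuel _ _ _ _ (by omega) (by omega)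
  · congr 2
    funext k
    rw [basisAct_single, hdeg]

theorem basisAct_single_sub_mem_degLE (i : Fin n) (α : Fin n → ℕ) :
    basisAct bs f i (single α 1) - single (α + Pi.single i 1) 1 ∈ degLE R n (deg α) := by
  by_cases h : LeSupport i α
  · rw [basisAct_single_of_leSupport h, sub_self]
    exact zero_mem _
  have hj : minIndex α i < i := minIndex_lt h
  have hα := sub_single_add_single (apply_minIndex_ne_zero_of_not_leSupport h)
  have hdeg := deg_sub_single (apply_minIndex_ne_zero_of_not_leSupport h)
  rw [basisAct_single_of_not_leSupport h]
  set j := minIndex α i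
  set β := α - Pi.single j 1
  have hβi := basisAct_single_sub_mem_degLE i β
  have hdeg' : deg (β + Pi.single i 1) = deg α := by rw [deg_add_single, hdeg]
  have hβij := basisAct_single_sub_mem_degLE j (β + Pi.single i 1)
  have hsplit : basisAct bs f j (basisAct bs f i (single β 1)) + rep bs f ⁅bs i, bs j⁆ (single β 1)
        + f (bs i) (bs j) • single β 1 - single (α + Pi.single i 1) 1
      = basisAct bs f j (basisAct bs f i (single β 1) - single (β + Pi.single i 1) 1)
        + (basisAct bs f j (single (β + Pi.single i 1) 1)
          - single (β + Pi.single i 1 + Pi.single j 1) 1)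
        + rep bs f ⁅bs i, bs j⁆ (single β 1) + f (bs i) (bs j) • single β 1 := by
    rw [map_sub, add_right_comm β, hα]
    abel
  have hlow := basisAct_mem_degLE (bs := bs) (f := f) j hβi
  have hrep := rep_mem_degLE (bs := bs) (f := f) ⁅bs i, bs j⁆
    (single_mem_degLE (γ := β) le_rfl (1 : R))
  rw [hdeg] at hlow hrep
  rw [hdeg'] at hβij
  rw [hsplit]
  exact add_mem (add_mem (add_mem hlow hβij) hrep)
    (Submodule.smul_mem _ _ (single_mem_degLE (by omega) 1))
  termination_by (deg α, i.val)
  decreasing_by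
    · exact Prod.Lex.left _ _ (by omega)
    · rw [hdeg']
      exact Prod.Lex.right _ hj

theorem monom_basisAct_single_zero (α : Fin n → ℕ) :
    monom (basisAct bs f) α (single 0 1) = single α 1 := by
  by_cases hα : α = 0
  · rw [hα, monom_zero]
    rfl
  obtain ⟨j, hj⟩ := Function.ne_iff.mp hα
  have hi := apply_minIndex_ne_zero hj j
  have hβ := (leSupport_minIndex α j).tsub (Pi.single (minIndex α j) 1)
  have hdeg := deg_sub_single hi
  rw [← sub_single_add_single hi, ← mul_monom_of_leSupport _ hβ, Module.End.mul_apply,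
    monom_basisAct_single_zero, basisAct_single_of_leSupport hβ]
  termination_by deg α

end Action

section Commutation

variable {R g : Type*} [CommRing R] [LieRing g] [LieAlgebra R g] {n : ℕ}
  {bs : Module.Basis (Fin n) R g} {f : g →ₗ[R] g →ₗ[R] R}

theorem defect_rep_single_of_leSupport {i j : Fin n} (hji : j < i) {α : Fin n → ℕ}
    (h : LeSupport j α) : defect (rep bs f) f (bs i) (bs j) (single α 1) = 0 := by
  have hmin : minIndex (α + Pi.single j 1) i = j := minIndex_eq (by simp) (h.add_single le_rfl) i
  simp only [defect_apply, LinearMap.sub_apply, Module.End.mul_apply, LinearMap.smul_apply,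
    Module.End.one_apply, rep_basis]
  rw [basisAct_single_of_leSupport h,
    basisAct_single_of_not_leSupport (not_leSupport_add_single hji α), hmin, add_tsub_cancel_right]
  abel

theorem defect_rep_single_of_lt
    (hcocycle : ∀ x y z : g, f x ⁅y, z⁆ + f z ⁅x, y⁆ + f y ⁅z, x⁆ = 0) {i j : Fin n} (hji : j < i)
    (α : Fin n → ℕ)
    (ih : ∀ γ, deg γ < deg α → ∀ x y, defect (rep bs f) f x y (single γ 1) = 0) :
    defect (rep bs f) f (bs i) (bs j) (single α 1) = 0 := by
  by_cases h : LeSupport j α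
  · exact defect_rep_single_of_leSupport hji h
  have hkj : minIndex α j < j := minIndex_lt h
  have hα := sub_single_add_single (apply_minIndex_ne_zero_of_not_leSupport h)
  have hdeg := deg_sub_single (apply_minIndex_ne_zero_of_not_leSupport h)
  have hβ := (leSupport_minIndex α j).tsub (Pi.single (minIndex α j) 1)
  set k := minIndex α j
  set β := α - Pi.single k 1
  have ihβ : ∀ x y, defect (rep bs f) f x y (single β 1) = 0 := ih β (by omega)
  have ih_degLE : ∀ x y, ∀ p ∈ degLE R n (deg β), defect (rep bs f) f x y p = 0 :=
    fun x y p hp => eqOn_degLE (T' := 0) (fun γ hγ => ih γ (by omega) x y) hp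
  -- the leading term `z^(β + e_c)` of `x_c z^β` is covered by the first case, the rest by `ih`
  have hcross : ∀ a c, k < a → k < c →
      defect (rep bs f) f (bs a) (bs k) (rep bs f (bs c) (single β 1)) = 0 := by
    intro a c hka hkc
    rw [rep_basis, ← sub_add_cancel (basisAct bs f c (single β 1)) (single (β + Pi.single c 1) 1),
      map_add, ih_degLE _ _ _ (basisAct_single_sub_mem_degLE c β), zero_add]
    exact defect_rep_single_of_leSupport hka (hβ.add_single hkc.le)
  rw [← hα, ← basisAct_single_of_leSupport (bs := bs) (f := f) hβ, ← rep_basis]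
  exact defect_apply_eq_zero_of_jacobi hcocycle ihβ (hcross i j (hkj.trans hji) hkj)
    (hcross j i hkj (hkj.trans hji))

theorem defect_rep_single (halt : ∀ x, f x x = 0)
    (hcocycle : ∀ x y z : g, f x ⁅y, z⁆ + f z ⁅x, y⁆ + f y ⁅z, x⁆ = 0) (α : Fin n → ℕ) (x y : g) :
    defect (rep bs f) f x y (single α 1) = 0 := by
  have ih : ∀ γ, deg γ < deg α → ∀ x y, defect (rep bs f) f x y (single γ 1) = 0 :=
    fun γ _ => defect_rep_single halt hcocycle γ
  refine defect_apply_eq_zero_of_basis bs (fun i j => ?_) x y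
  rcases lt_trichotomy j i with hji | rfl | hij
  · exact defect_rep_single_of_lt hcocycle hji α ih
  · rw [defect_self halt, LinearMap.zero_apply]
  · rw [defect_swap halt, LinearMap.neg_apply, defect_rep_single_of_lt hcocycle hij α ih, neg_zero]
  termination_by deg α

theorem defect_rep_eq_zero (halt : ∀ x, f x x = 0)
    (hcocycle : ∀ x y z : g, f x ⁅y, z⁆ + f z ⁅x, y⁆ + f y ⁅z, x⁆ = 0) :
    defect (rep bs f) f = 0 := by
  ext x y α : 4
  exact defect_rep_single halt hcocycle α x y

end Commutation

section PBW

variable {K g : Type*} [Field K] [LieRing g] [LieAlgebra K g] {n : ℕ}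
  (bs : Module.Basis (Fin n) K g) (f : g →ₗ[K] g →ₗ[K] K)

noncomputable def gen (i : Fin n) : RingQuot (sridharanRel K g f) :=
  RingQuot.mkAlgHom K (sridharanRel K g f) (TensorAlgebra.ι K (bs i))

noncomputable def monomialMap : ((Fin n → ℕ) →₀ K) →ₗ[K] RingQuot (sridharanRel K g f) :=
  linearCombination K (monom (gen bs f))

variable {bs f}

theorem monomialMap_single (α : Fin n → ℕ) :
    monomialMap bs f (single α 1) = monom (gen bs f) α := by
  rw [monomialMap, linearCombination_single, one_smul]

variable (bs) in
theorem mkAlgHom_ι_eq (z : g) :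
    RingQuot.mkAlgHom K (sridharanRel K g f) (TensorAlgebra.ι K z)
      = linearCombination K (gen bs f) (bs.repr z) := by
  conv_lhs => rw [← bs.linearCombination_repr z]
  simp only [linearCombination_apply, map_finsuppSum, map_smul, gen]

theorem gen_mul_gen (i j : Fin n) :
    gen bs f i * gen bs f j = gen bs f j * gen bs f i
      + RingQuot.mkAlgHom K (sridharanRel K g f) (TensorAlgebra.ι K ⁅bs i, bs j⁆)
      + algebraMap K _ (f (bs i) (bs j)) := by
  have h := RingQuot.mkAlgHom_rel K (s := sridharanRel K g f) ⟨bs i, bs j, rfl, rfl⟩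
  simp only [map_mul, map_add, AlgHom.commutes] at h
  exact h

theorem monomialMap_rep_of {p : (Fin n → ℕ) →₀ K}
    (hp : ∀ k, monomialMap bs f (basisAct bs f k p) = gen bs f k * monomialMap bs f p) (z : g) :
    monomialMap bs f (rep bs f z p)
      = RingQuot.mkAlgHom K (sridharanRel K g f) (TensorAlgebra.ι K z) * monomialMap bs f p := by
  rw [rep_apply, mkAlgHom_ι_eq bs, linearCombination_apply, linearCombination_apply,
    map_finsuppSum, Finsupp.sum_mul]
  exact Finsupp.sum_congr fun k _ => by rw [map_smul, hp, smul_mul_assoc]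

theorem monomialMap_basisAct_single (i : Fin n) (α : Fin n → ℕ) :
    monomialMap bs f (basisAct bs f i (single α 1))
      = gen bs f i * monomialMap bs f (single α 1) := by
  by_cases h : LeSupport i α
  · rw [basisAct_single_of_leSupport h, monomialMap_single, monomialMap_single,
      mul_monom_of_leSupport _ h]
  have hj := minIndex_lt h
  have hα := sub_single_add_single (apply_minIndex_ne_zero_of_not_leSupport h)
  have hdeg := deg_sub_single (apply_minIndex_ne_zero_of_not_leSupport h)
  have hβ := (leSupport_minIndex α i).tsub (Pi.single (minIndex α i) 1)
  rw [basisAct_single_of_not_leSupport h]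
  set j := minIndex α i
  set β := α - Pi.single j 1
  have ihβ : ∀ k, monomialMap bs f (basisAct bs f k (single β 1))
      = gen bs f k * monomialMap bs f (single β 1) :=
    fun k => monomialMap_basisAct_single k β
  have ihj : ∀ p ∈ degLE K n (deg α),
      monomialMap bs f (basisAct bs f j p) = gen bs f j * monomialMap bs f p :=
    fun p hp => eqOn_degLE (T := monomialMap bs f ∘ₗ basisAct bs f j)
      (T' := LinearMap.mulLeft K (gen bs f j) ∘ₗ monomialMap bs f)
      (fun γ hγ => monomialMap_basisAct_single j γ) hp
  have hmem : basisAct bs f i (single β 1) ∈ degLE K n (deg α) :=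
    hdeg ▸ basisAct_mem_degLE i (single_mem_degLE le_rfl 1)
  rw [map_add, map_add, map_smul, ihj _ hmem, ihβ i, monomialMap_rep_of ihβ, monomialMap_single,
    monomialMap_single, ← hα, ← mul_monom_of_leSupport _ hβ, ← mul_assoc (gen bs f i),
    gen_mul_gen i j, add_mul, add_mul, Algebra.smul_def, mul_assoc]
  termination_by (deg α, i.val)
  decreasing_by
    · exact Prod.Lex.left _ _ (by omega)
    · rcases hγ.lt_or_eq with hlt | heq
      · exact Prod.Lex.left _ _ hlt
      · rw [heq]
        exact Prod.Lex.right _ hj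

theorem monomialMap_basisAct (i : Fin n) (p : (Fin n → ℕ) →₀ K) :
    monomialMap bs f (basisAct bs f i p) = gen bs f i * monomialMap bs f p := by
  induction p using Finsupp.induction_linear with
  | zero => simp
  | add p q hp hq => rw [map_add, map_add, hp, hq, map_add, mul_add]
  | single α c =>
    rw [← mul_one c, ← smul_single', map_smul, map_smul, monomialMap_basisAct_single, map_smul,
      mul_smul_comm]

theorem monomialMap_rep (z : g) (p : (Fin n → ℕ) →₀ K) :
    monomialMap bs f (rep bs f z p)
      = RingQuot.mkAlgHom K (sridharanRel K g f) (TensorAlgebra.ι K z) * monomialMap bs f p :=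
  monomialMap_rep_of (fun k => monomialMap_basisAct k p) z

theorem monomialMap_liftOfDefectEqZero_apply (h : defect (rep bs f) f = 0)
    (u : RingQuot (sridharanRel K g f)) (p : (Fin n → ℕ) →₀ K) :
    monomialMap bs f (liftOfDefectEqZero h u p) = u * monomialMap bs f p := by
  obtain ⟨t, rfl⟩ := RingQuot.mkAlgHom_surjective K (sridharanRel K g f) u
  induction t using TensorAlgebra.induction generalizing p with
  | algebraMap r =>
    rw [AlgHom.commutes, AlgHom.commutes, Module.algebraMap_end_apply, map_smul, Algebra.smul_def]
  | ι z => rw [liftOfDefectEqZero_mk_ι, monomialMap_rep]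
  | mul a b ha hb => rw [map_mul, map_mul, Module.End.mul_apply, ha, hb, mul_assoc]
  | add a b ha hb => rw [map_add, map_add, LinearMap.add_apply, map_add, ha, hb, add_mul]

theorem monomialMap_leftInverse (h : defect (rep bs f) f = 0) :
    Function.LeftInverse (fun u => liftOfDefectEqZero h u (single 0 1)) (monomialMap bs f) := by
  have hgen : ⇑(liftOfDefectEqZero h) ∘ gen bs f = basisAct bs f := by
    funext i
    rw [Function.comp_apply, gen, liftOfDefectEqZero_mk_ι, rep_basis]
  intro p
  beta_reduce
  induction p using Finsupp.induction_linear with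
  | zero => simp
  | add p q hp hq => simp only [map_add, LinearMap.add_apply] at hp hq ⊢; rw [hp, hq]
  | single α c =>
    rw [← mul_one c, ← smul_single', map_smul, map_smul, LinearMap.smul_apply, monomialMap_single,
      map_monom, hgen, monom_basisAct_single_zero]

theorem monomialMap_surjective (h : defect (rep bs f) f = 0) :
    Function.Surjective (monomialMap bs f) := fun u =>
  ⟨liftOfDefectEqZero h u (single 0 1), by
    rw [monomialMap_liftOfDefectEqZero_apply, monomialMap_single, monom_zero, mul_one]⟩

end PBW

end Sridharan

theorem sridharan_PBW_general (K : Type*) [Field K] (g : Type*) [LieRing g] [LieAlgebra K g]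
    (n : ℕ) (bs : Module.Basis (Fin n) K g)
    (f : g →ₗ[K] g →ₗ[K] K)
    (halt : ∀ x : g, f x x = 0)
    (hcocycle : ∀ x y z : g, f x ⁅y, z⁆ + f z ⁅x, y⁆ + f y ⁅z, x⁆ = 0) :
    ∃ b : Module.Basis (Fin n → ℕ) K (RingQuot (sridharanRel K g f)), ∀ α : Fin n → ℕ,
      b α = monom (fun i => RingQuot.mkAlgHom K (sridharanRel K g f)
              (TensorAlgebra.ι K (bs i))) α := by
  have h : Sridharan.defect (Sridharan.rep bs f) f = 0 :=
    Sridharan.defect_rep_eq_zero halt hcocycle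
  let θ := LinearEquiv.ofBijective (Sridharan.monomialMap bs f)
    ⟨(Sridharan.monomialMap_leftInverse h).injective, Sridharan.monomialMap_surjective h⟩
  refine ⟨Finsupp.basisSingleOne.map θ, fun α => ?_⟩
  rw [Module.Basis.map_apply, Finsupp.coe_basisSingleOne]
  exact Sridharan.monomialMap_single α

/-- **PBW theorem for Sridharan enveloping algebras.**  Let `g` be a Lie algebra over a field
`K` and `f : g × g → K` a bilinear 2-cocycle (`f(x,x) = 0` and
`f(x,[y,z]) + f(z,[x,y]) + f(y,[z,x]) = 0`).  If `g` is finite-dimensional with basis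
`x₁,…,xₙ`, then the Sridharan enveloping algebra
`U_f(g) = T(g)/⟨x⊗y − y⊗x − [x,y] − f(x,y)⟩` has the standard monomials
`x₁^{α₁} ⋯ xₙ^{αₙ}` as a `K`-vector space basis. -/
theorem sridharan_PBW (K : Type*) [Field K] (g : Type*) [LieRing g] [LieAlgebra K g]
    [Module.Finite K g] (n : ℕ) (bs : Module.Basis (Fin n) K g)
    (f : g →ₗ[K] g →ₗ[K] K)
    (halt : ∀ x : g, f x x = 0)
    (hcocycle : ∀ x y z : g, f x ⁅y, z⁆ + f z ⁅x, y⁆ + f y ⁅z, x⁆ = 0) :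
    ∃ b : Module.Basis (Fin n → ℕ) K (RingQuot (sridharanRel K g f)), ∀ α : Fin n → ℕ,
      b α = monom (fun i => RingQuot.mkAlgHom K (sridharanRel K g f)
              (TensorAlgebra.ι K (bs i))) α :=
  sridharan_PBW_general K g n bs f halt hcocycle
end
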